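/- Let N = [[0, Eᵀ],[E, ×B]] with E, B ∈ ℝ³ satisfying E·E = B·B and E·B = 0 (so that cN = N - iN* is null). Then the vector s = ((E² + B²)/2)·u + (0, E × B), where u = (1,0,0,0)ᵀ, satisfies Ns = 0, i.e., s is a real eigenvector of N with eigenvalue 0, and s is a null vector for the Minkowski metric diag(-1,1,1,1). -/
import Mathlib

open Matrix

def Nmat (E B : Fin 3 → ℝ) : Matrix (Fin 4) (Fin 4) ℝ :=
  !![0,   E 0,    E 1,    E 2;
     E 0, 0,      B 2,    -(B 1);
     E 1, -(B 2), 0,      B 0;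
     E 2, B 1,    -(B 0), 0]

def rdot (A B : Fin 3 → ℝ) : ℝ := A 0 * B 0 + A 1 * B 1 + A 2 * B 2

/-- For null N, s = ((E²+B²)/2)u + (0, E×B) is a real null eigenvector with eigenvalue 0. -/
theorem stmt_19 (E B : Fin 3 → ℝ) (h1 : rdot E E = rdot B B) (h2 : rdot E B = 0) :
    Nmat E B *ᵥ
        ![(rdot E E + rdot B B) / 2,
          (crossProduct E B) 0, (crossProduct E B) 1, (crossProduct E B) 2] = 0 ∧
      -(((rdot E E + rdot B B) / 2) * ((rdot E E + rdot B B) / 2)) +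
          (crossProduct E B) 0 * (crossProduct E B) 0 +
          (crossProduct E B) 1 * (crossProduct E B) 1 +
          (crossProduct E B) 2 * (crossProduct E B) 2 = 0 := by
  unfold rdot at *
  simp only [crossProduct, LinearMap.mk₂_apply] at *
  constructor
  · funext i
    fin_cases i <;>
      simp [Nmat, mulVec, dotProduct, Fin.sum_univ_succ]
    · ring
    · linear_combination (E 0 / 2) * h1 + B 0 * h2
    · linear_combination (E 1 / 2) * h1 + B 1 * h2
    · linear_combination (E 2 / 2) * h1 + B 2 * h2
  · simp only [Matrix.cons_val_zero, Matrix.cons_val_one, Matrix.head_cons,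
      Matrix.cons_val_two, Matrix.tail_cons]
    linear_combination ((B 0 * B 0 + B 1 * B 1 + B 2 * B 2 -
        (E 0 * E 0 + E 1 * E 1 + E 2 * E 2)) / 4) * h1 -
      (E 0 * B 0 + E 1 * B 1 + E 2 * B 2) * h2
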